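/- The MFD block matrix A admits the exact block LDU factorization A = L·S·U, where L is unit block lower triangular with subdiagonal blocks -(τ/2)curl_V and -(τ/2)div_D, U is unit block upper triangular with superdiagonal blocks (τ/2)curl_D and (τ/2)grad_D, and S = diag((2/τ)I, S_E, S_p) with Schur complements S_E = (τ/2)curl_V curl_D + (2/τ)I and S_p = (τ/2)div_D grad_D + (2/τ)I, provided the structure-preserving identities curl_D grad_D = 0 and div_V curl_D = 0 hold (the key cancellation using div_D curl_V computed from the Schur complement structure). -/
import Mathlib

open Matrix

/-- A 3×3 block matrix. -/
def blk3 {α : Type*} {l m n : Type*}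
    (A11 : Matrix l l α) (A12 : Matrix l m α) (A13 : Matrix l n α)
    (A21 : Matrix m l α) (A22 : Matrix m m α) (A23 : Matrix m n α)
    (A31 : Matrix n l α) (A32 : Matrix n m α) (A33 : Matrix n n α) :
    Matrix (l ⊕ m ⊕ n) (l ⊕ m ⊕ n) α :=
  Matrix.of fun i j =>
    match i, j with
    | Sum.inl i, Sum.inl j => A11 i j
    | Sum.inl i, Sum.inr (Sum.inl j) => A12 i j
    | Sum.inl i, Sum.inr (Sum.inr j) => A13 i j
    | Sum.inr (Sum.inl i), Sum.inl j => A21 i j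
    | Sum.inr (Sum.inl i), Sum.inr (Sum.inl j) => A22 i j
    | Sum.inr (Sum.inl i), Sum.inr (Sum.inr j) => A23 i j
    | Sum.inr (Sum.inr i), Sum.inl j => A31 i j
    | Sum.inr (Sum.inr i), Sum.inr (Sum.inl j) => A32 i j
    | Sum.inr (Sum.inr i), Sum.inr (Sum.inr j) => A33 i j

/-- Multiplication formula for 3×3 block matrices. -/
lemma blk3_mul {α : Type*} [CommRing α] {l m n : Type*} [Fintype l] [Fintype m] [Fintype n]
    (A11 : Matrix l l α) (A12 : Matrix l m α) (A13 : Matrix l n α)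
    (A21 : Matrix m l α) (A22 : Matrix m m α) (A23 : Matrix m n α)
    (A31 : Matrix n l α) (A32 : Matrix n m α) (A33 : Matrix n n α)
    (B11 : Matrix l l α) (B12 : Matrix l m α) (B13 : Matrix l n α)
    (B21 : Matrix m l α) (B22 : Matrix m m α) (B23 : Matrix m n α)
    (B31 : Matrix n l α) (B32 : Matrix n m α) (B33 : Matrix n n α) :
    blk3 A11 A12 A13 A21 A22 A23 A31 A32 A33 * blk3 B11 B12 B13 B21 B22 B23 B31 B32 B33 =
    blk3 (A11*B11+A12*B21+A13*B31) (A11*B12+A12*B22+A13*B32) (A11*B13+A12*B23+A13*B33)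
         (A21*B11+A22*B21+A23*B31) (A21*B12+A22*B22+A23*B32) (A21*B13+A22*B23+A23*B33)
         (A31*B11+A32*B21+A33*B31) (A31*B12+A32*B22+A33*B32) (A31*B13+A32*B23+A33*B33) := by
  ext (i | i | i) (j | j | j) <;>
    simp [blk3, Matrix.mul_apply, Fintype.sum_sum_type, Matrix.add_apply] <;> ring

/-- blk3 is determined by its blocks. -/
lemma blk3_congr {α : Type*} {l m n : Type*}
    {A11 B11 : Matrix l l α} {A12 B12 : Matrix l m α} {A13 B13 : Matrix l n α}
    {A21 B21 : Matrix m l α} {A22 B22 : Matrix m m α} {A23 B23 : Matrix m n α}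
    {A31 B31 : Matrix n l α} {A32 B32 : Matrix n m α} {A33 B33 : Matrix n n α}
    (h11 : A11 = B11) (h12 : A12 = B12) (h13 : A13 = B13)
    (h21 : A21 = B21) (h22 : A22 = B22) (h23 : A23 = B23)
    (h31 : A31 = B31) (h32 : A32 = B32) (h33 : A33 = B33) :
    blk3 A11 A12 A13 A21 A22 A23 A31 A32 A33 = blk3 B11 B12 B13 B21 B22 B23 B31 B32 B33 := by
  subst h11 h12 h13 h21 h22 h23 h31 h32 h33; rfl

/-- The MFD block matrix admits the exact block LDU factorization
A = L·S·U with Schur complements S_E = (τ/2)curl_V curl_D + (2/τ)I and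
S_p = (τ/2)div_D grad_D + (2/τ)I, provided the structure-preserving identities
curl_D grad_D = 0 and div_D curl_V = 0 hold. -/
theorem mfd_block_LDU {nB nE nP : ℕ} (τ : ℝ) (hτ : 0 < τ)
    (curlD : Matrix (Fin nB) (Fin nE) ℝ) (curlV : Matrix (Fin nE) (Fin nB) ℝ)
    (gradD : Matrix (Fin nE) (Fin nP) ℝ) (divD : Matrix (Fin nP) (Fin nE) ℝ)
    (hcg : curlD * gradD = 0) (hdc : divD * curlV = 0) :
    blk3
      ((2 / τ) • (1 : Matrix (Fin nB) (Fin nB) ℝ)) curlD 0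
      (-curlV) ((2 / τ) • (1 : Matrix (Fin nE) (Fin nE) ℝ)) gradD
      0 (-divD) ((2 / τ) • (1 : Matrix (Fin nP) (Fin nP) ℝ)) =
    (blk3
        (1 : Matrix (Fin nB) (Fin nB) ℝ) 0 0
        (-((τ / 2) • curlV)) (1 : Matrix (Fin nE) (Fin nE) ℝ) 0
        0 (-((τ / 2) • divD)) (1 : Matrix (Fin nP) (Fin nP) ℝ)) *
      (blk3
        ((2 / τ) • (1 : Matrix (Fin nB) (Fin nB) ℝ)) 0 0
        0 ((τ / 2) • (curlV * curlD) + (2 / τ) • (1 : Matrix (Fin nE) (Fin nE) ℝ)) 0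
        0 0 ((τ / 2) • (divD * gradD) + (2 / τ) • (1 : Matrix (Fin nP) (Fin nP) ℝ))) *
      (blk3
        (1 : Matrix (Fin nB) (Fin nB) ℝ) ((τ / 2) • curlD) 0
        0 (1 : Matrix (Fin nE) (Fin nE) ℝ) ((τ / 2) • gradD)
        0 0 (1 : Matrix (Fin nP) (Fin nP) ℝ)) := by
  have hτ' : τ ≠ 0 := ne_of_gt hτ
  rw [blk3_mul, blk3_mul]
  refine (blk3_congr ?_ ?_ ?_ ?_ ?_ ?_ ?_ ?_ ?_).symm <;>
  · simp [Matrix.mul_smul, Matrix.smul_mul, Matrix.mul_add, Matrix.add_mul, hcg, hdc,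
      Matrix.mul_assoc, smul_smul]
    try rw [smul_smul]
    try rw [← Matrix.mul_assoc, hdc, Matrix.zero_mul]
    try field_simp
    try module
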